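/- Let B(G_1, …, G_n) be the bouquet of pairwise disjoint connected graphs G_1, …, G_n with respect to vertices x_i ∈ V(G_i), obtained by identifying all the vertices x_1, …, x_n into a single vertex x. Then Mo(B(G_1, …, G_n)) ≤ Σ_{i=1}^{n} Mo(G_i) + Σ_{i=1}^{n} |E(G_i)|·(|V(G)| − |V(G_i)|), where G = B(G_1, …, G_n). -/

import Mathlib

open Finset

section MostarDefs

variable {V : Type*}

/-- Number of vertices of `G` strictly closer to `u` than to `v`. -/
noncomputable def closerCount (G : SimpleGraph V) (u v : V) : ℕ :=
  Nat.card {w : V // G.dist w u < G.dist w v}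

/-- Contribution `|n_u - n_v|` of an edge, as a symmetric function on `Sym2 V`. -/
noncomputable def mostarTerm (G : SimpleGraph V) : Sym2 V → ℕ :=
  Sym2.lift ⟨fun u v => ((closerCount G u v : ℤ) - closerCount G v u).natAbs,
    fun u v => by dsimp only; omega⟩

/-- The Mostar index of a finite graph. -/
noncomputable def mostar (G : SimpleGraph V) [Finite V] : ℕ :=
  letI := Fintype.ofFinite V
  letI := Classical.decEq V
  letI := Classical.decRel G.Adj
  ∑ e ∈ G.edgeFinset, mostarTerm G e

/-- Distance from a vertex `w` to an edge, as min over the endpoints. -/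
noncomputable def vertexEdgeDist (G : SimpleGraph V) (w : V) : Sym2 V → ℕ :=
  Sym2.lift ⟨fun x y => min (G.dist x w) (G.dist y w), fun _ _ => min_comm _ _⟩

/-- Number of edges of `G` strictly closer to `u` than to `v`. -/
noncomputable def edgeCloserCount (G : SimpleGraph V) (u v : V) : ℕ :=
  Nat.card {e : Sym2 V // e ∈ G.edgeSet ∧ vertexEdgeDist G u e < vertexEdgeDist G v e}

/-- Contribution `|m_u - m_v|` of an edge, as a symmetric function on `Sym2 V`. -/
noncomputable def emostarTerm (G : SimpleGraph V) : Sym2 V → ℕ :=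
  Sym2.lift ⟨fun u v => ((edgeCloserCount G u v : ℤ) - edgeCloserCount G v u).natAbs,
    fun u v => by dsimp only; omega⟩

/-- The edge Mostar index of a finite graph. -/
noncomputable def emostar (G : SimpleGraph V) [Finite V] : ℕ :=
  letI := Fintype.ofFinite V
  letI := Classical.decEq V
  letI := Classical.decRel G.Adj
  ∑ e ∈ G.edgeFinset, emostarTerm G e

end MostarDefs


instance {α : Type*} [Finite α] : Finite (Option α) :=
  Finite.of_equiv _ (Equiv.optionEquivSumPUnit.{0} α).symm

/-- The bouquet `B(G 0, …, G (n-1))` of the graphs `G i` with respect to the vertices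
`x i`, obtained by identifying all the vertices `x i` into a single vertex (`none`). -/
def bouquetGraph (n : ℕ) (V : ℕ → Type*) (G : ∀ i, SimpleGraph (V i)) (x : ∀ i, V i) :
    SimpleGraph (Option ((i : Fin n) × {v : V i.val // v ≠ x i.val})) where
  Adj p q :=
    (∃ (i : Fin n) (a b : {v : V i.val // v ≠ x i.val}),
      (G i.val).Adj a.1 b.1 ∧ p = some ⟨i, a⟩ ∧ q = some ⟨i, b⟩) ∨
    (∃ (i : Fin n) (b : {v : V i.val // v ≠ x i.val}), (G i.val).Adj (x i.val) b.1 ∧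
      ((p = none ∧ q = some ⟨i, b⟩) ∨ (p = some ⟨i, b⟩ ∧ q = none)))
  symm := by
    refine ⟨?_⟩
    rintro p q (⟨i, a, b, h, rfl, rfl⟩ | ⟨i, b, h, (⟨rfl, rfl⟩ | ⟨rfl, rfl⟩)⟩)
    · exact Or.inl ⟨i, b, a, h.symm, rfl, rfl⟩
    · exact Or.inr ⟨i, b, h, Or.inr ⟨rfl, rfl⟩⟩
    · exact Or.inr ⟨i, b, h, Or.inl ⟨rfl, rfl⟩⟩
  loopless := by
    refine ⟨?_⟩
    rintro p (⟨i, a, b, h, rfl, hab⟩ | ⟨i, b, h, (⟨rfl, hab⟩ | ⟨rfl, hab⟩)⟩)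
    · obtain rfl : a = b := by simpa using hab
      exact (G i.val).irrefl h
    · cases hab
    · cases hab

/-! Every block `G i` sits isometrically in the bouquet: the inclusion is a graph homomorphism,
and the retraction that collapses all other blocks onto the common vertex sends walks to walks
that are no longer. Hence, for an edge `uv` of `G i`, the vertices of that block split between `u`
and `v` exactly as in `G i`, while the `|V(G)| - |V(G i)|` vertices outside the block change
`|n_u - n_v|` by at most their number, since each of them is counted on at most one side.
Every edge of the bouquet lies in some block. -/

theorem Finset.card_filter_add_card_filter_lt_le {α : Type*} (s : Finset α) (a b : α → ℕ) :
    #{x ∈ s | a x < b x} + #{x ∈ s | b x < a x} ≤ #s := by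
  calc #{x ∈ s | a x < b x} + #{x ∈ s | b x < a x}
      ≤ #{x ∈ s | a x < b x} + #{x ∈ s | ¬ a x < b x} := by
        gcongr
        exact Nat.not_lt_of_gt
    _ = #s := card_filter_add_card_filter_not _

namespace SimpleGraph

variable {V W : Type*} {G : SimpleGraph V} {H : SimpleGraph W}

theorem Walk.exists_walk_length_le_of_adj_or_eq (g : W → V)
    (hg : ∀ ⦃p q⦄, H.Adj p q → G.Adj (g p) (g q) ∨ g p = g q) {p q : W} (w : H.Walk p q) :
    ∃ w' : G.Walk (g p) (g q), w'.length ≤ w.length := by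
  induction w with
  | nil => exact ⟨.nil, le_rfl⟩
  | cons hadj _ ih =>
    obtain ⟨w', hw'⟩ := ih
    rcases hg hadj with hadj' | heq
    · exact ⟨.cons hadj' w', by simpa using hw'⟩
    · exact ⟨w'.copy heq.symm rfl, by simp; omega⟩

theorem dist_map_eq_of_leftInverse (f : G →g H) (g : W → V) (hgf : ∀ v, g (f v) = v)
    (hg : ∀ ⦃p q⦄, H.Adj p q → G.Adj (g p) (g q) ∨ g p = g q) (u v : V) :
    H.dist (f u) (f v) = G.dist u v := by
  have project : ∀ w : H.Walk (f u) (f v), ∃ w' : G.Walk u v, w'.length ≤ w.length := by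
    intro w
    obtain ⟨w', hw'⟩ := w.exists_walk_length_le_of_adj_or_eq g hg
    exact ⟨w'.copy (hgf u) (hgf v), by simpa using hw'⟩
  by_cases hr : G.Reachable u v
  · apply le_antisymm
    · obtain ⟨w, hw⟩ := hr.exists_walk_length_eq_dist
      simpa [hw] using dist_le (w.map f)
    · obtain ⟨w, hw⟩ := (hr.map f).exists_walk_length_eq_dist
      obtain ⟨w', hw'⟩ := project w
      exact (dist_le w').trans (hw ▸ hw')
  · have hr' : ¬H.Reachable (f u) (f v) := fun ⟨w⟩ => hr ⟨(project w).choose⟩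
    rw [dist_eq_zero_of_not_reachable hr, dist_eq_zero_of_not_reachable hr']

theorem closerCount_eq_card_filter [Fintype V] (u v : V) :
    closerCount G u v = #{w | G.dist w u < G.dist w v} := by
  rw [closerCount, Nat.card_eq_fintype_card, Fintype.card_subtype]

theorem mostar_eq_sum [Fintype V] [DecidableEq V] [DecidableRel G.Adj] [Fintype G.edgeSet] :
    mostar G = ∑ e ∈ G.edgeFinset, mostarTerm G e := by
  unfold mostar
  exact Finset.sum_congr (by ext; simp) fun _ _ => rfl

section IsometricEmbedding

variable [Fintype V] [Fintype W] [DecidableEq W] {f : V → W}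

theorem closerCount_eq_add_card_filter_compl (hf : Function.Injective f)
    (hd : ∀ a b, H.dist (f a) (f b) = G.dist a b) (u v : V) :
    closerCount H (f u) (f v) = closerCount G u v +
      #{w ∈ univ \ univ.image f | H.dist w (f u) < H.dist w (f v)} := by
  have hrange : #{w ∈ univ.image f | H.dist w (f u) < H.dist w (f v)} = closerCount G u v := by
    rw [filter_image, card_image_of_injective _ hf, closerCount_eq_card_filter]
    simp only [hd]
  rw [closerCount_eq_card_filter, ← hrange, ← card_union_of_disjoint
    (disjoint_filter_filter disjoint_sdiff), ← filter_union, union_sdiff_of_subset (subset_univ _)]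

theorem mostarTerm_map_le (hf : Function.Injective f)
    (hd : ∀ a b, H.dist (f a) (f b) = G.dist a b) (u v : V) :
    mostarTerm H s(f u, f v) ≤ mostarTerm G s(u, v) + (Fintype.card W - Fintype.card V) := by
  have houtside := Finset.card_filter_add_card_filter_lt_le (univ \ univ.image f)
    (fun w => H.dist w (f u)) (fun w => H.dist w (f v))
  rw [card_sdiff_of_subset (subset_univ _), card_image_of_injective _ hf, card_univ,
    card_univ] at houtside
  simp only [mostarTerm, Sym2.lift_mk]
  rw [closerCount_eq_add_card_filter_compl hf hd, closerCount_eq_add_card_filter_compl hf hd]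
  omega

end IsometricEmbedding

theorem mostar_le_sum_of_isometric_cover {ι : Type*} [Fintype ι] {V : ι → Type*}
    [∀ i, Finite (V i)] [Finite W] {G : ∀ i, SimpleGraph (V i)} (f : ∀ i, V i → W)
    (hf : ∀ i, Function.Injective (f i)) (hd : ∀ i a b, H.dist (f i a) (f i b) = (G i).dist a b)
    (hcover : ∀ ⦃p q⦄, H.Adj p q → ∃ i a b, (G i).Adj a b ∧ f i a = p ∧ f i b = q) :
    mostar H ≤ ∑ i, (mostar (G i) + Nat.card (G i).edgeSet * (Nat.card W - Nat.card (V i))) := by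
  classical
  have := Fintype.ofFinite W
  have : ∀ i, Fintype (V i) := fun i => Fintype.ofFinite _
  let E := univ.sigma fun i => (G i).edgeFinset
  let F : (Σ i, Sym2 (V i)) → Sym2 W := fun e => e.2.map (f e.1)
  have hEF : H.edgeFinset ⊆ E.image F := by
    intro e he
    induction e using Sym2.ind with
    | _ p q =>
      obtain ⟨i, a, b, hab, rfl, rfl⟩ := hcover (mem_edgeFinset.mp he)
      exact mem_image.mpr ⟨⟨i, s(a, b)⟩, mem_sigma.mpr ⟨mem_univ _, mem_edgeFinset.mpr hab⟩, rfl⟩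
  calc mostar H = ∑ e ∈ H.edgeFinset, mostarTerm H e := mostar_eq_sum
    _ ≤ ∑ e ∈ E.image F, mostarTerm H e := sum_le_sum_of_subset hEF
    _ ≤ ∑ e ∈ E, mostarTerm H (F e) := sum_image_le_of_nonneg fun _ _ => Nat.zero_le _
    _ = ∑ i, ∑ e ∈ (G i).edgeFinset, mostarTerm H (e.map (f i)) := sum_sigma _ _ _
    _ ≤ ∑ i, ∑ e ∈ (G i).edgeFinset,
          (mostarTerm (G i) e + (Fintype.card W - Fintype.card (V i))) := by
      gcongr with i _ e
      induction e using Sym2.ind with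
      | _ a b => exact mostarTerm_map_le (hf i) (hd i) a b
    _ = ∑ i, (mostar (G i) + Nat.card (G i).edgeSet * (Nat.card W - Nat.card (V i))) := by
      simp only [sum_add_distrib, sum_const, smul_eq_mul, mostar_eq_sum, Nat.card_eq_fintype_card,
        edgeFinset_card]

end SimpleGraph

namespace bouquetGraph

variable {n : ℕ} {V : ℕ → Type*} {G : ∀ i, SimpleGraph (V i)} {x : ∀ i, V i}

open Classical in
noncomputable def incl (x : ∀ i, V i) (i : Fin n) (v : V i) :
    Option ((j : Fin n) × {v : V j.val // v ≠ x j.val}) :=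
  if h : v = x i then none else some ⟨i, v, h⟩

def proj (x : ∀ i, V i) (i : Fin n) : Option ((j : Fin n) × {v : V j.val // v ≠ x j.val}) → V i
  | none => x i
  | some ⟨j, w⟩ => if h : j = i then h ▸ w.1 else x i

@[simp] theorem incl_self (i : Fin n) : incl x i (x i) = none := dif_pos rfl

@[simp] theorem incl_val (i : Fin n) (v : {v : V i.val // v ≠ x i.val}) :
    incl x i v.1 = some ⟨i, v⟩ := dif_neg v.2

@[simp] theorem proj_incl (i : Fin n) (v : V i) : proj x i (incl x i v) = v := by
  by_cases h : v = x i
  · subst h; simp [proj]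
  · simp [incl, h, proj]

theorem proj_incl_of_ne {i j : Fin n} (hji : j ≠ i) (v : V j) : proj x i (incl x j v) = x i := by
  by_cases h : v = x j
  · subst h; simp [proj]
  · simp [incl, h, proj, hji]

theorem incl_injective (i : Fin n) : Function.Injective (incl x i) :=
  Function.LeftInverse.injective (proj_incl i)

theorem incl_adj (i : Fin n) {u v : V i} (h : (G i).Adj u v) :
    (bouquetGraph n V G x).Adj (incl x i u) (incl x i v) := by
  by_cases hu : u = x i <;> by_cases hv : v = x i
  · exact absurd (hu.trans hv.symm) h.ne
  · subst hu
    exact Or.inr ⟨i, ⟨v, hv⟩, h, Or.inl ⟨incl_self i, incl_val i ⟨v, hv⟩⟩⟩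
  · subst hv
    exact Or.inr ⟨i, ⟨u, hu⟩, h.symm, Or.inr ⟨incl_val i ⟨u, hu⟩, incl_self i⟩⟩
  · exact Or.inl ⟨i, ⟨u, hu⟩, ⟨v, hv⟩, h, incl_val i ⟨u, hu⟩, incl_val i ⟨v, hv⟩⟩

theorem exists_incl_of_adj {p q : Option ((j : Fin n) × {v : V j.val // v ≠ x j.val})}
    (h : (bouquetGraph n V G x).Adj p q) :
    ∃ (i : Fin n) (a b : V i), (G i).Adj a b ∧ incl x i a = p ∧ incl x i b = q := by
  rcases h with ⟨i, a, b, h, rfl, rfl⟩ | ⟨i, b, h, ⟨rfl, rfl⟩ | ⟨rfl, rfl⟩⟩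
  · exact ⟨i, a, b, h, incl_val i a, incl_val i b⟩
  · exact ⟨i, x i, b, h, incl_self i, incl_val i b⟩
  · exact ⟨i, b, x i, h.symm, incl_val i b, incl_self i⟩

theorem proj_adj_or_eq (i : Fin n) {p q : Option ((j : Fin n) × {v : V j.val // v ≠ x j.val})}
    (h : (bouquetGraph n V G x).Adj p q) :
    (G i).Adj (proj x i p) (proj x i q) ∨ proj x i p = proj x i q := by
  obtain ⟨j, a, b, hab, rfl, rfl⟩ := exists_incl_of_adj h
  by_cases hji : j = i
  · subst hji; simp [hab]
  · simp [proj_incl_of_ne hji]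

theorem dist_incl (i : Fin n) (u v : V i) :
    (bouquetGraph n V G x).dist (incl x i u) (incl x i v) = (G i).dist u v :=
  SimpleGraph.dist_map_eq_of_leftInverse ⟨incl x i, incl_adj i⟩ (proj x i) (proj_incl i)
    (fun _ _ => proj_adj_or_eq i) u v

end bouquetGraph

open bouquetGraph SimpleGraph in
theorem mostar_bouquetGraph_le_general (n : ℕ) (V : ℕ → Type*) [∀ i, Finite (V i)]
    (G : ∀ i, SimpleGraph (V i)) (x : ∀ i, V i) :
    mostar (bouquetGraph n V G x) ≤
      (∑ i ∈ range n, mostar (G i)) +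
      ∑ i ∈ range n, Nat.card (G i).edgeSet *
        (Nat.card (Option ((i : Fin n) × {v : V i.val // v ≠ x i.val})) - Nat.card (V i)) := by
  rw [← Fin.sum_univ_eq_sum_range, ← Fin.sum_univ_eq_sum_range, ← sum_add_distrib]
  exact mostar_le_sum_of_isometric_cover (fun i => incl x i) incl_injective dist_incl
    fun _ _ => exists_incl_of_adj

theorem mostar_bouquetGraph_le (n : ℕ) (hn : 1 ≤ n) (V : ℕ → Type*) [∀ i, Finite (V i)]
    (G : ∀ i, SimpleGraph (V i)) (hconn : ∀ i < n, (G i).Connected) (x : ∀ i, V i) :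
    mostar (bouquetGraph n V G x) ≤
      (∑ i ∈ range n, mostar (G i)) +
      ∑ i ∈ range n, Nat.card (G i).edgeSet *
        (Nat.card (Option ((i : Fin n) × {v : V i.val // v ≠ x i.val})) - Nat.card (V i)) :=
  mostar_bouquetGraph_le_general n V G x
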